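/- arXiv:2409.15265 — 3 statements merged into one kernel-verified Lean document; each statement's English description precedes it below -/
import Mathlib

section
/- Let G be a group and t_1, ..., t_r ∈ G with t_r ⋯ t_1 = 1. Define a Hurwitz move on tuples as replacing adjacent entries (t_{i+1}, t_i) by (t_{i+1} t_i t_{i+1}^{-1}, t_{i+1}) or by (t_i, t_i^{-1} t_{i+1} t_i). Then for any f in the subgroup ⟨t_1, ..., t_r⟩ generated by the entries, the tuple (f t_r f^{-1}, ..., f t_1 f^{-1}) can be obtained from (t_r, ..., t_1) by a finite sequence of Hurwitz moves. -/
/-!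
Hurwitz moves are invertible and commute with applying a homomorphism entrywise, so the
elements `f` for which `L` reaches its global conjugate by `f` form a subgroup of `G`. It
therefore suffices to treat an entry `t` of `L`. Sliding `t` rightwards across the rest of the
tuple conjugates every other entry by `t`; when the product is `1`, sliding the first entry
across the rest by the inverse moves is a cyclic rotation, which brings `t` to the front and
afterwards puts the conjugated entries back in their original positions.
-/

/-- A Hurwitz move replaces an adjacent pair `(a, b)` in a list either by
`(a * b * a⁻¹, a)` (elementary transformation) or by `(b, b⁻¹ * a * b)`
(its inverse move). Both moves preserve the length and the ordered product. -/
inductive HurwitzMove {G : Type*} [Group G] : List G → List G → Prop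
  | left (l₁ l₂ : List G) (a b : G) :
      HurwitzMove (l₁ ++ a :: b :: l₂) (l₁ ++ (a * b * a⁻¹) :: a :: l₂)
  | right (l₁ l₂ : List G) (a b : G) :
      HurwitzMove (l₁ ++ a :: b :: l₂) (l₁ ++ b :: (b⁻¹ * a * b) :: l₂)

namespace HurwitzMove

variable {G : Type*} [Group G]

local infix:50 " ~ₕ " => Relation.ReflTransGen HurwitzMove

theorem symm {A B : List G} (h : HurwitzMove A B) : HurwitzMove B A := by
  cases h with
  | left l₁ l₂ a b => simpa [mul_assoc] using right l₁ l₂ (a * b * a⁻¹) a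
  | right l₁ l₂ a b => simpa [mul_assoc] using left l₁ l₂ b (b⁻¹ * a * b)

theorem cons (c : G) {A B : List G} (h : HurwitzMove A B) : HurwitzMove (c :: A) (c :: B) := by
  cases h with
  | left l₁ l₂ a b => exact left (c :: l₁) l₂ a b
  | right l₁ l₂ a b => exact right (c :: l₁) l₂ a b

theorem map {H F : Type*} [Group H] [FunLike F G H] [MonoidHomClass F G H] (φ : F)
    {A B : List G} (h : HurwitzMove A B) : HurwitzMove (A.map φ) (B.map φ) := by
  cases h with
  | left l₁ l₂ a b => simpa using left (l₁.map φ) (l₂.map φ) (φ a) (φ b)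
  | right l₁ l₂ a b => simpa using right (l₁.map φ) (l₂.map φ) (φ a) (φ b)

instance : Std.Symm (@HurwitzMove G _) := ⟨fun _ _ => symm⟩

theorem reflTransGen_symm {A B : List G} (h : A ~ₕ B) : B ~ₕ A :=
  Std.Symm.symm _ _ h

theorem reflTransGen_cons (c : G) {A B : List G} (h : A ~ₕ B) : c :: A ~ₕ c :: B :=
  h.lift (c :: ·) fun _ _ => cons c

theorem reflTransGen_map {H F : Type*} [Group H] [FunLike F G H] [MonoidHomClass F G H]
    (φ : F) {A B : List G} (h : A ~ₕ B) : A.map φ ~ₕ B.map φ :=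
  h.lift (List.map φ) fun _ _ => map φ

theorem reflTransGen_slide_conj (a : G) (l : List G) :
    a :: l ~ₕ l.map (MulAut.conj a) ++ [a] := by
  induction l with
  | nil => exact .refl
  | cons b l ih => exact .head (left [] l a b) (reflTransGen_cons _ ih)

theorem reflTransGen_slide (a : G) (l : List G) :
    a :: l ~ₕ l ++ [l.prod⁻¹ * a * l.prod] := by
  induction l generalizing a with
  | nil => simpa using .refl
  | cons b l ih =>
    refine .head (right [] l a b) (reflTransGen_cons b ?_)
    simpa [mul_assoc] using ih (b⁻¹ * a * b)

theorem reflTransGen_rotate_one {a : G} {l : List G} (h : (a :: l).prod = 1) :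
    a :: l ~ₕ l ++ [a] := by
  have hl : l.prod = a⁻¹ := eq_inv_of_mul_eq_one_right (by simpa using h)
  simpa [hl] using reflTransGen_slide a l

theorem reflTransGen_rotate {L : List G} (hL : L.prod = 1) (n : ℕ) : L ~ₕ L.rotate n := by
  induction n generalizing L with
  | zero => simpa using .refl
  | succ n ih =>
    cases L with
    | nil => simpa using .refl
    | cons a l =>
      have hrot : (l ++ [a]).prod = 1 := by
        simpa using mul_eq_one_comm.mp (by simpa using hL)
      simpa using (reflTransGen_rotate_one hL).trans (ih hrot)

theorem reflTransGen_map_conj_head {t : G} {l : List G} (h : (t :: l).prod = 1) :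
    t :: l ~ₕ (t :: l).map (MulAut.conj t) := by
  have hconj : ((t :: l).map (MulAut.conj t)).prod = 1 := by
    rw [← map_list_prod, h, map_one]
  have hback := reflTransGen_symm (reflTransGen_rotate_one hconj)
  simp only [List.map_cons, MulAut.conj_apply, mul_inv_cancel_right] at hback ⊢
  exact (reflTransGen_slide_conj t l).trans hback

theorem reflTransGen_map_conj_of_mem {L : List G} (hL : L.prod = 1) {t : G} (ht : t ∈ L) :
    L ~ₕ L.map (MulAut.conj t) := by
  obtain ⟨l₁, l₂, rfl⟩ := List.append_of_mem ht
  set n := l₁.length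
  have hfront : (l₁ ++ t :: l₂).rotate n = t :: (l₂ ++ l₁) := List.rotate_append_length_eq _ _
  have hconj : ((l₁ ++ t :: l₂).map (MulAut.conj t)).prod = 1 := by
    rw [← map_list_prod, hL, map_one]
  calc l₁ ++ t :: l₂ ~ₕ (l₁ ++ t :: l₂).rotate n := reflTransGen_rotate hL n
    _ ~ₕ ((l₁ ++ t :: l₂).rotate n).map (MulAut.conj t) := by
        rw [hfront]
        exact reflTransGen_map_conj_head (hfront ▸ List.prod_rotate_eq_one_of_prod_eq_one hL n)
    _ = ((l₁ ++ t :: l₂).map (MulAut.conj t)).rotate n := List.map_rotate _ _ _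
    _ ~ₕ (l₁ ++ t :: l₂).map (MulAut.conj t) := reflTransGen_symm (reflTransGen_rotate hconj n)

def conjugators (L : List G) : Subgroup G where
  carrier := {f | L ~ₕ L.map (MulAut.conj f)}
  one_mem' := by simpa using .refl
  mul_mem' {x y} hx hy := by
    simpa [List.map_map, Function.comp_def] using hx.trans (reflTransGen_map (MulAut.conj x) hy)
  inv_mem' {x} hx := by
    simpa [List.map_map, Function.comp_def, mul_assoc] using
      reflTransGen_symm (reflTransGen_map (MulAut.conj x⁻¹) hx)

theorem closure_le_conjugators {L : List G} (hL : L.prod = 1) :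
    Subgroup.closure {g | g ∈ L} ≤ conjugators L :=
  (Subgroup.closure_le _).2 fun _ ht => reflTransGen_map_conj_of_mem hL ht

end HurwitzMove

/-- If the product of the entries of `L` is `1` and `f` lies in the subgroup
generated by the entries of `L`, then the globally conjugated tuple is obtained
from `L` by a finite sequence of Hurwitz moves. -/
theorem hurwitz_reaches_global_conjugate {G : Type*} [Group G] (L : List G)
    (hL : L.prod = 1) (f : G) (hf : f ∈ Subgroup.closure {g : G | g ∈ L}) :
    Relation.ReflTransGen HurwitzMove L (L.map fun t => f * t * f⁻¹) :=
  HurwitzMove.closure_le_conjugators hL hf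
end

section
/- Let Γ be a group, K ⊴ Γ a normal subgroup, G₀ ≤ Γ a subgroup with G₀ ∩ K = {1}, and P ∈ Γ. Let H be the subgroup generated by {g P g^{-1} : g ∈ G₀} and let G = ⟨G₀, P⟩. If H ⊆ K, then G ∩ K = H. -/
/-- If `K` is normal, `G₀ ∩ K` is trivial, `H` is the subgroup generated by all
`G₀`-conjugates of `P`, `G = ⟨G₀, P⟩`, and `H ≤ K`, then `G ∩ K = H`. -/
theorem kernel_of_restricted_birman {Γ : Type*} [Group Γ]
    (K : Subgroup Γ) [K.Normal] (G₀ : Subgroup Γ) (P : Γ)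
    (hdisj : G₀ ⊓ K = ⊥)
    (H : Subgroup Γ) (hH : H = Subgroup.closure {x : Γ | ∃ g ∈ G₀, x = g * P * g⁻¹})
    (G : Subgroup Γ) (hG : G = Subgroup.closure ((G₀ : Set Γ) ∪ {P}))
    (hHK : H ≤ K) :
    G ⊓ K = H := by
  have hPH : P ∈ H := by
    rw [hH]
    exact Subgroup.subset_closure ⟨1, one_mem _, by group⟩
  have hconj : ∀ g ∈ G₀, ∀ h ∈ H, g * h * g⁻¹ ∈ H := by
    intro g hg h hh
    rw [hH] at hh ⊢
    induction hh using Subgroup.closure_induction with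
    | mem x hx =>
      obtain ⟨g', hg', rfl⟩ := hx
      exact Subgroup.subset_closure ⟨g * g', mul_mem hg hg', by group⟩
    | one => simpa using one_mem _
    | mul a b _ _ ha hb =>
      have : g * (a * b) * g⁻¹ = (g * a * g⁻¹) * (g * b * g⁻¹) := by group
      rw [this]; exact mul_mem ha hb
    | inv a _ ha =>
      have : g * a⁻¹ * g⁻¹ = (g * a * g⁻¹)⁻¹ := by group
      rw [this]; exact inv_mem ha
  have hHG : H ≤ G := by
    rw [hH, hG]
    apply Subgroup.closure_le _ |>.mpr
    rintro x ⟨g, hg, rfl⟩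
    exact mul_mem (mul_mem (Subgroup.subset_closure (Or.inl hg))
      (Subgroup.subset_closure (Or.inr rfl)))
      (inv_mem (Subgroup.subset_closure (Or.inl hg)))
  have hdecomp : ∀ x ∈ G, ∃ g ∈ G₀, ∃ h ∈ H, x = g * h := by
    intro x hx
    rw [hG] at hx
    induction hx using Subgroup.closure_induction with
    | mem x hx =>
      rcases hx with hx | hx
      · exact ⟨x, hx, 1, one_mem _, (mul_one x).symm⟩
      · exact ⟨1, one_mem _, P, hPH, by simp [Set.mem_singleton_iff.mp hx]⟩
    | one => exact ⟨1, one_mem _, 1, one_mem _, (mul_one 1).symm⟩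
    | mul a b _ _ ha hb =>
      obtain ⟨g, hg, h, hh, rfl⟩ := ha
      obtain ⟨g', hg', h', hh', rfl⟩ := hb
      refine ⟨g * g', mul_mem hg hg', (g'⁻¹ * h * g'⁻¹⁻¹) * h',
        mul_mem (hconj g'⁻¹ (inv_mem hg') h hh) hh', by group⟩
    | inv a _ ha =>
      obtain ⟨g, hg, h, hh, rfl⟩ := ha
      refine ⟨g⁻¹, inv_mem hg, g * h⁻¹ * g⁻¹, hconj g hg h⁻¹ (inv_mem hh), by group⟩
  apply le_antisymm
  · rintro x ⟨hxG, hxK⟩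
    obtain ⟨g, hg, h, hh, rfl⟩ := hdecomp _ hxG
    have hgK : g ∈ K := by
      have hhK : h ∈ K := hHK hh
      have := K.mul_mem hxK (K.inv_mem hhK)
      simpa using this
    have : g = 1 := by
      have : g ∈ G₀ ⊓ K := ⟨hg, hgK⟩
      rw [hdisj] at this
      simpa using this
    simpa [this] using hh
  · exact le_inf hHG hHK
end

section
/- Let M be a free ℤ-module of finite rank at least 1. For each nonzero integer k, suppose A_k ≤ M is a subgroup such that A_k ⊆ k·M and A_k contains an element of the form k·u with u primitive. Then for nonzero integers k₁, k₂ with |k₁| ≠ |k₂|, there is no automorphism f of M with f(A_{k₁}) = A_{k₂}. -/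
/-!
An automorphism `f` sends the primitive element `u` with `k₁ • u ∈ A k₁` to a primitive element
`f u` with `k₁ • f u ∈ A k₂ ⊆ k₂ • M`. In a torsion-free group, `k₁ • f u = k₂ • y` with `f u`
primitive forces `k₂ ∣ k₁`; applying the same argument to `f⁻¹` gives `k₁ ∣ k₂`.
-/

/-- A nonzero element of a free `ℤ`-module is primitive if its only integer
divisors are `±1`. -/
def IsPrimitiveElt {M : Type*} [AddCommGroup M] [Module ℤ M] (u : M) : Prop :=
  u ≠ 0 ∧ ∀ (n : ℤ) (v : M), u = n • v → n = 1 ∨ n = -1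

namespace IsPrimitiveElt

variable {M N : Type*} [AddCommGroup M] [AddCommGroup N] {u : M}

lemma map (f : M ≃+ N) (hu : IsPrimitiveElt u) : IsPrimitiveElt (f u) := by
  refine ⟨f.map_ne_zero_iff.mpr hu.1, fun n v hv => hu.2 n (f.symm v) (f.injective ?_)⟩
  rwa [map_zsmul, f.apply_symm_apply]

lemma isUnit_of_eq_smul (hu : IsPrimitiveElt u) {n : ℤ} {v : M} (h : u = n • v) : IsUnit n :=
  Int.isUnit_iff.mpr (hu.2 n v h)

lemma dvd_of_smul_eq_smul [IsAddTorsionFree M] (hu : IsPrimitiveElt u) {y : M} {k l : ℤ}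
    (hk : k ≠ 0) (h : k • u = l • y) : l ∣ k := by
  obtain ⟨g, a, b, hg, hab, rfl, rfl⟩ := Int.exists_gcd_one' (Int.gcd_pos_of_ne_zero_left l hk)
  have hcancel : a • u = b • y := by
    refine zsmul_right_injective (Int.natCast_ne_zero.mpr hg.ne') ?_
    simpa only [smul_smul, mul_comm (g : ℤ)] using h
  obtain ⟨s, t, hst⟩ := Int.isCoprime_iff_gcd_eq_one.mpr hab
  have hu_mul : u = b • (s • y + t • u) := by
    calc u = (s * a + t * b) • u := by rw [hst, one_smul]
      _ = s • (a • u) + t • (b • u) := by rw [add_smul, mul_smul, mul_smul]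
      _ = b • (s • y + t • u) := by rw [hcancel, smul_add, smul_comm s b, smul_comm t b]
  exact mul_dvd_mul_right (hu.isUnit_of_eq_smul hu_mul).dvd g

end IsPrimitiveElt

lemma dvd_of_mapsTo_of_forall_mem_eq_smul {M N : Type*} [AddCommGroup M] [AddCommGroup N]
    [IsAddTorsionFree N] {B : AddSubgroup M} {C : AddSubgroup N} {k l : ℤ} (hk : k ≠ 0)
    (hB : ∃ u : M, IsPrimitiveElt u ∧ k • u ∈ B) (hC : ∀ x ∈ C, ∃ y : N, x = l • y)
    (f : M ≃+ N) (hf : Set.MapsTo f B C) : l ∣ k := by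
  obtain ⟨u, hu, hkuB⟩ := hB
  obtain ⟨y, hy⟩ := hC _ (hf hkuB)
  exact (hu.map f).dvd_of_smul_eq_smul hk (by rwa [map_zsmul] at hy)

theorem no_automorphism_between_levels_general {M : Type*} [AddCommGroup M] [Module ℤ M]
    [Module.Free ℤ M]
    (A : ℤ → AddSubgroup M)
    (hsub : ∀ k : ℤ, k ≠ 0 → ∀ x ∈ A k, ∃ y : M, x = k • y)
    (hprim : ∀ k : ℤ, k ≠ 0 → ∃ u : M, IsPrimitiveElt u ∧ k • u ∈ A k)
    (k₁ k₂ : ℤ) (hk₁ : k₁ ≠ 0) (hk₂ : k₂ ≠ 0) (habs : |k₁| ≠ |k₂|) :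
    ¬ ∃ f : M ≃ₗ[ℤ] M, (A k₁).map f.toLinearMap.toAddMonoidHom = A k₂ := by
  rintro ⟨f, hf⟩
  -- `Module.Free` is about the given `ℤ`-module structure, only propositionally the canonical one.
  obtain rfl : ‹Module ℤ M› = AddCommGroup.toIntModule M := Subsingleton.elim _ _
  have : IsAddTorsionFree M := Module.isTorsionFree_int_iff_isAddTorsionFree.mp inferInstance
  have hf_mapsTo : Set.MapsTo f (A k₁) (A k₂) := fun x hx => hf ▸ AddSubgroup.mem_map_of_mem _ hx
  have hf_symm_mapsTo : Set.MapsTo f.symm (A k₂) (A k₁) := by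
    intro x hx
    obtain ⟨z, hz, rfl⟩ := AddSubgroup.mem_map.mp (hf ▸ hx)
    simpa using hz
  have h₂₁ := dvd_of_mapsTo_of_forall_mem_eq_smul hk₁ (hprim k₁ hk₁) (hsub k₂ hk₂)
    f.toAddEquiv hf_mapsTo
  have h₁₂ := dvd_of_mapsTo_of_forall_mem_eq_smul hk₂ (hprim k₂ hk₂) (hsub k₁ hk₁)
    f.symm.toAddEquiv hf_symm_mapsTo
  exact habs (abs_eq_abs.mpr (Int.associated_iff.mp (associated_of_dvd_dvd h₁₂ h₂₁)))

/-- If for each nonzero `k` the subgroup `A k` is contained in `k • M` and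
contains `k • u` for some primitive `u`, then for `|k₁| ≠ |k₂|` (both nonzero)
no automorphism of `M` maps `A k₁` onto `A k₂`. -/
theorem no_automorphism_between_levels {M : Type*} [AddCommGroup M] [Module ℤ M]
    [Module.Free ℤ M] [Module.Finite ℤ M] (hrank : 1 ≤ Module.finrank ℤ M)
    (A : ℤ → AddSubgroup M)
    (hsub : ∀ k : ℤ, k ≠ 0 → ∀ x ∈ A k, ∃ y : M, x = k • y)
    (hprim : ∀ k : ℤ, k ≠ 0 → ∃ u : M, IsPrimitiveElt u ∧ k • u ∈ A k)
    (k₁ k₂ : ℤ) (hk₁ : k₁ ≠ 0) (hk₂ : k₂ ≠ 0) (habs : |k₁| ≠ |k₂|) :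
    ¬ ∃ f : M ≃ₗ[ℤ] M, (A k₁).map f.toLinearMap.toAddMonoidHom = A k₂ :=
  no_automorphism_between_levels_general A hsub hprim k₁ k₂ hk₁ hk₂ habs
end
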